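/- Let (ωₙ) be a sequence of nonnegative reals such that the heat kernel K(t) = Σₙ e^(−ωₙ² t) converges for every t > 0. Then for every Ω > 0, Σₙ ωₙ erfc(ωₙ/Ω) = (Ω/√π) K(Ω^{−2}) − (1/√(4π)) ∫_{Ω^{−2}}^∞ t^(−3/2) K(t) dt, and in particular the left-hand sum converges. -/

import Mathlib

/-!
For `c ≥ 0` the function `2√π c erfc(c√t) - 2 e^{-c²t} / √t` is an antiderivative of
`t^{-3/2} e^{-c²t}` on `t > 0` that vanishes at infinity, so
`∫_a^∞ t^{-3/2} e^{-c²t} dt = 2 e^{-c²a} / √a - 2√π c erfc(c√a)`.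
With `a = Ω⁻²` and `c = ωₙ` this expresses each `ωₙ erfc(ωₙ/Ω)` through the heat kernel terms.
The integrands are nonnegative and their integrals are at most `2Ω e^{-ωₙ² a}`, which is summable
by hypothesis, so the sum over `n` can be taken under the integral.
-/

open MeasureTheory Real Set

/-- The complementary error function `erfc x = (2/√π) ∫_x^∞ e^{-t²} dt`. -/
noncomputable def erfc (x : ℝ) : ℝ :=
  (2 / Real.sqrt π) * ∫ t in Set.Ioi x, Real.exp (-t ^ 2)

open Filter Topology

lemma integrable_exp_neg_sq : Integrable fun u : ℝ => exp (-u ^ 2) := by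
  simpa using integrable_exp_neg_mul_sq one_pos

lemma integral_Ioi_exp_neg_sq (x : ℝ) :
    ∫ u in Ioi x, exp (-u ^ 2) = (∫ u in Ioi 0, exp (-u ^ 2)) - ∫ u in (0 : ℝ)..x, exp (-u ^ 2) :=
  eq_sub_of_add_eq' <| intervalIntegral.integral_interval_add_Ioi
    integrable_exp_neg_sq.integrableOn integrable_exp_neg_sq.integrableOn

lemma hasDerivAt_erfc (x : ℝ) : HasDerivAt erfc (-(2 / √π) * exp (-x ^ 2)) x := by
  have hprim : HasDerivAt (fun y => ∫ u in (0 : ℝ)..y, exp (-u ^ 2)) (exp (-x ^ 2)) x :=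
    intervalIntegral.integral_hasDerivAt_right integrable_exp_neg_sq.intervalIntegrable
      integrable_exp_neg_sq.aestronglyMeasurable.stronglyMeasurableAtFilter
      (by fun_prop)
  have h := (hprim.const_sub (∫ u in Ioi 0, exp (-u ^ 2))).const_mul (2 / √π)
  simp only [← integral_Ioi_exp_neg_sq] at h
  rw [neg_mul, ← mul_neg]
  exact h

lemma erfc_nonneg (x : ℝ) : 0 ≤ erfc x :=
  mul_nonneg (by positivity) (integral_nonneg fun _ => (exp_pos _).le)

lemma tendsto_erfc_atTop : Tendsto erfc atTop (𝓝 0) := by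
  have h := ((intervalIntegral_tendsto_integral_Ioi 0 integrable_exp_neg_sq.integrableOn
    tendsto_id).const_sub (∫ u in Ioi 0, exp (-u ^ 2))).const_mul (2 / √π)
  simp only [sub_self, mul_zero, id, ← integral_Ioi_exp_neg_sq] at h
  exact h

lemma exp_neg_sq_mul_le_one (c : ℝ) {t : ℝ} (ht : 0 ≤ t) : exp (-c ^ 2 * t) ≤ 1 :=
  exp_le_one_iff.2 (by nlinarith [sq_nonneg c])

lemma integrableOn_rpow_mul_exp_neg_sq_mul (c : ℝ) {a : ℝ} (ha : 0 < a) :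
    IntegrableOn (fun t : ℝ => t ^ (-(3 / 2) : ℝ) * exp (-c ^ 2 * t)) (Ioi a) := by
  refine (integrableOn_Ioi_rpow_of_lt (by norm_num) ha).mul_bdd (c := 1) (by fun_prop) ?_
  filter_upwards [ae_restrict_mem measurableSet_Ioi] with t ht
  rw [norm_of_nonneg (exp_pos _).le]
  exact exp_neg_sq_mul_le_one c (ha.trans ht).le

lemma hasDerivAt_erfc_sub_exp_div_sqrt (c : ℝ) {t : ℝ} (ht : 0 < t) :
    HasDerivAt (fun t => 2 * √π * c * erfc (c * √t) - 2 * exp (-c ^ 2 * t) / √t)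
      (t ^ (-(3 / 2) : ℝ) * exp (-c ^ 2 * t)) t := by
  have hsqrt := hasDerivAt_sqrt ht.ne'
  have herfc := ((hasDerivAt_erfc (c * √t)).comp t (hsqrt.const_mul c)).const_mul (2 * √π * c)
  have hexp : HasDerivAt (fun t => exp (-c ^ 2 * t)) (exp (-c ^ 2 * t) * (-c ^ 2)) t := by
    simpa using ((hasDerivAt_id t).const_mul (-c ^ 2)).exp
  refine (herfc.sub ((hexp.const_mul 2).div hsqrt (sqrt_pos.2 ht).ne')).congr_deriv ?_
  have hrpow : t ^ (-(3 / 2) : ℝ) = (t * √t)⁻¹ := by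
    rw [rpow_neg ht.le, show (3 / 2 : ℝ) = 1 + 1 / 2 by norm_num, rpow_add ht, rpow_one,
      ← sqrt_eq_rpow]
  have hexp_sq : exp (-(c * √t) ^ 2) = exp (-c ^ 2 * t) := by
    rw [mul_pow, sq_sqrt ht.le, neg_mul]
  have hsqrt_pos := sqrt_pos.2 ht
  rw [hrpow, hexp_sq]
  field_simp
  rw [sq_sqrt ht.le]
  ring

lemma tendsto_erfc_sub_exp_div_sqrt {c : ℝ} (hc : 0 ≤ c) :
    Tendsto (fun t => 2 * √π * c * erfc (c * √t) - 2 * exp (-c ^ 2 * t) / √t) atTop (𝓝 0) := by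
  have herfc : Tendsto (fun t => 2 * √π * c * erfc (c * √t)) atTop (𝓝 0) := by
    rcases hc.eq_or_lt with rfl | hc
    · simp
    · simpa using (tendsto_erfc_atTop.comp (tendsto_sqrt_atTop.const_mul_atTop hc)).const_mul
        (2 * √π * c)
  have hexp : Tendsto (fun t => 2 * exp (-c ^ 2 * t) / √t) atTop (𝓝 0) := by
    refine tendsto_bdd_div_atTop_nhds_zero (b := 0) (B := 2) (.of_forall fun t => by positivity)
      ?_ tendsto_sqrt_atTop
    filter_upwards [eventually_ge_atTop 0] with t ht
    linarith [exp_neg_sq_mul_le_one c ht]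
  simpa using herfc.sub hexp

lemma integral_rpow_mul_exp_neg_sq_mul {c : ℝ} (hc : 0 ≤ c) {a : ℝ} (ha : 0 < a) :
    ∫ t in Ioi a, t ^ (-(3 / 2) : ℝ) * exp (-c ^ 2 * t)
      = 2 * exp (-c ^ 2 * a) / √a - 2 * √π * c * erfc (c * √a) := by
  rw [integral_Ioi_of_hasDerivAt_of_tendsto'
    (fun t ht => hasDerivAt_erfc_sub_exp_div_sqrt c (ha.trans_le ht))
    (integrableOn_rpow_mul_exp_neg_sq_mul c ha) (tendsto_erfc_sub_exp_div_sqrt hc)]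
  ring

lemma integral_rpow_mul_exp_neg_sq_mul_le {c : ℝ} (hc : 0 ≤ c) {a : ℝ} (ha : 0 < a) :
    ∫ t in Ioi a, t ^ (-(3 / 2) : ℝ) * exp (-c ^ 2 * t) ≤ 2 * exp (-c ^ 2 * a) / √a := by
  rw [integral_rpow_mul_exp_neg_sq_mul hc ha]
  exact sub_le_self _ (mul_nonneg (by positivity) (erfc_nonneg _))

lemma mul_erfc_div_eq {c Ω : ℝ} (hc : 0 ≤ c) (hΩ : 0 < Ω) :
    c * erfc (c / Ω) = Ω / √π * exp (-c ^ 2 * (Ω ^ 2)⁻¹)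
      - 1 / √(4 * π) * ∫ t in Ioi (Ω ^ 2)⁻¹, t ^ (-(3 / 2) : ℝ) * exp (-c ^ 2 * t) := by
  have hsqrt_four_pi : √(4 * π) = 2 * √π := by
    rw [sqrt_mul zero_le_four, show (4 : ℝ) = 2 ^ 2 by norm_num, sqrt_sq zero_le_two]
  rw [integral_rpow_mul_exp_neg_sq_mul hc (by positivity), sqrt_inv, sqrt_sq hΩ.le,
    hsqrt_four_pi, ← div_eq_mul_inv]
  have hsqrt_pi := sqrt_pos.2 pi_pos
  field_simp
  ring

lemma hasSum_integral_of_nonneg {α ι : Type*} [MeasurableSpace α] {μ : Measure α} [Countable ι]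
    {F : ι → α → ℝ} (hF_int : ∀ i, Integrable (F i) μ) (hF_nonneg : ∀ i, 0 ≤ᵐ[μ] F i)
    (hF_sum : Summable fun i => ∫ a, F i a ∂μ) :
    HasSum (fun i => ∫ a, F i a ∂μ) (∫ a, ∑' i, F i a ∂μ) :=
  hasSum_integral_of_summable_integral_norm hF_int <| hF_sum.congr fun i =>
    integral_congr_ae <| (hF_nonneg i).mono fun _ h => (norm_of_nonneg h).symm

theorem erfc_regularized_sum_eq_heat_kernel_rep (ω : ℕ → ℝ) (hω : ∀ n, 0 ≤ ω n)
    (hK : ∀ t : ℝ, 0 < t → Summable fun n => Real.exp (-(ω n) ^ 2 * t))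
    (Ω : ℝ) (hΩ : 0 < Ω) :
    HasSum (fun n => ω n * erfc (ω n / Ω))
      ((Ω / Real.sqrt π) * (∑' n, Real.exp (-(ω n) ^ 2 * (Ω ^ 2)⁻¹))
        - (1 / Real.sqrt (4 * π)) *
            ∫ t in Set.Ioi ((Ω ^ 2)⁻¹),
              t ^ (-(3/2) : ℝ) * (∑' n, Real.exp (-(ω n) ^ 2 * t))) := by
  set a := (Ω ^ 2)⁻¹
  have ha : 0 < a := by positivity
  have hnonneg : ∀ n, ∀ t ∈ Ioi a, 0 ≤ t ^ (-(3 / 2) : ℝ) * exp (-ω n ^ 2 * t) :=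
    fun n t ht => mul_nonneg (rpow_nonneg (ha.trans ht).le _) (exp_pos _).le
  have hintegrals : HasSum (fun n => ∫ t in Ioi a, t ^ (-(3 / 2) : ℝ) * exp (-ω n ^ 2 * t))
      (∫ t in Ioi a, t ^ (-(3 / 2) : ℝ) * ∑' n, exp (-ω n ^ 2 * t)) := by
    simp_rw [← tsum_mul_left]
    refine hasSum_integral_of_nonneg (fun n => integrableOn_rpow_mul_exp_neg_sq_mul _ ha)
      (fun n => ae_restrict_of_forall_mem measurableSet_Ioi (hnonneg n)) ?_
    refine .of_nonneg_of_le (fun n => setIntegral_nonneg measurableSet_Ioi (hnonneg n))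
      (fun n => integral_rpow_mul_exp_neg_sq_mul_le (hω n) ha) ?_
    exact ((hK a ha).mul_left 2).div_const _
  rw [funext fun n => mul_erfc_div_eq (hω n) hΩ]
  exact ((hK a ha).hasSum.mul_left _).sub (hintegrals.mul_left _)
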